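/- arXiv:2006.04659 — 2 statements merged into one kernel-verified Lean document; each statement's English description precedes it below -/
import Mathlib

section
/- At-the-money-forward leading term and the Brenner–Subrahmanyam limit: fix S_t > 0, σ > 0 and τ > 0, and for α > 0 set δ := σ²α. Then lim_{α→∞} (S_t δτ/π) e^{αδτ} K₀(αδτ) = S_t σ √τ / √(2π); that is, the leading (n₁ = 0, n₂ = 1) term of the symmetric NIG European call series at the money forward converges, in the large-steepness regime with σ² = δ/α held fixed, to the Black–Scholes at-the-money-forward approximation S_t σ√τ/√(2π). -/
/-!
The substitution `u = v - z / (2v)`, followed by `t = v²`, turns the integral defining `K₀`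
into `e^{z} K₀(z) = ∫ e^{-u²} / √(u² + 2z) du`. After multiplying by `√z` the integrand becomes
`e^{-u²} / √(u²/z + 2)`, which converges to `e^{-u²} / √2` under the Gaussian bound, so
`√z e^{z} K₀(z) → √(π/2)`. With `z = σ²τα²` and `√z = σα√τ` the leading term is
`(Sσ√τ/π) √z e^{z} K₀(z)`, whence the limit `Sσ√τ/π · √(π/2) = Sσ√τ/√(2π)`.
-/

open MeasureTheory

/-- Modified Bessel function of the second kind, real index `ν`, real argument `z`. -/
noncomputable def besselKr (ν : ℝ) (z : ℝ) : ℝ :=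
  (1 / 2) * (z / 2) ^ ν *
    ∫ t in Set.Ioi (0 : ℝ), Real.exp (-t - z ^ 2 / (4 * t)) * t ^ (-ν - 1)

open Set Filter Topology Real

theorem integral_comp_sub_div_Ioi {E : Type*} [NormedAddCommGroup E] [NormedSpace ℝ E]
    (g : ℝ → E) {c : ℝ} (hc : 0 < c) :
    ∫ v in Ioi 0, (1 + c / v ^ 2) • g (v - c / v) = ∫ u, g u := by
  have hderiv : ∀ v ∈ Ioi (0 : ℝ),
      HasDerivWithinAt (fun v => v - c / v) (1 + c / v ^ 2) (Ioi 0) v := fun v hv =>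
    ((hasDerivAt_id' v).sub ((hasDerivAt_const v c).div (hasDerivAt_id' v)
      (ne_of_gt hv))).hasDerivWithinAt.congr_deriv (by ring)
  have hmono : StrictMonoOn (fun v : ℝ => v - c / v) (Ioi 0) := by
    intro a ha b hb hab
    have : c / b ≤ c / a := div_le_div_of_nonneg_left hc.le ha hab.le
    simp only
    linarith
  have himage : (fun v : ℝ => v - c / v) '' Ioi 0 = univ := by
    refine eq_univ_of_forall fun u => ?_
    set s := √(u ^ 2 + 4 * c)
    have hs : s ^ 2 = u ^ 2 + 4 * c := sq_sqrt (by positivity)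
    have hus : |u| < s := by
      rw [← sqrt_sq_eq_abs]
      exact sqrt_lt_sqrt (sq_nonneg u) (by linarith)
    have hv : 0 < (u + s) / 2 := by linarith [neg_abs_le u]
    refine ⟨(u + s) / 2, hv, ?_⟩
    have : u + s ≠ 0 := by linarith
    field_simp
    linear_combination hs
  have hsubst := integral_image_eq_integral_abs_deriv_smul measurableSet_Ioi hderiv hmono.injOn g
  rw [himage, setIntegral_univ] at hsubst
  rw [hsubst]
  refine setIntegral_congr_fun measurableSet_Ioi fun v hv => ?_
  have : (0 : ℝ) < v := hv
  rw [abs_of_pos (by positivity)]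

theorem besselKr_zero_eq_integral (z : ℝ) :
    besselKr 0 z = ∫ v in Ioi 0, exp (-v ^ 2 - z ^ 2 / (4 * v ^ 2)) / v := by
  have h := integral_comp_rpow_Ioi_of_pos (p := 2) two_pos
    (g := fun t => exp (-t - z ^ 2 / (4 * t)) * t ^ (-(0 : ℝ) - 1))
  rw [besselKr, ← h, ← integral_const_mul]
  simp only [rpow_zero, mul_one]
  refine setIntegral_congr_fun measurableSet_Ioi fun v hv => ?_
  have : (0 : ℝ) < v := hv
  norm_num [rpow_two, rpow_neg_one]
  field_simp

theorem integral_exp_neg_sq_div_sqrt_eq_exp_mul_besselKr_zero {z : ℝ} (hz : 0 < z) :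
    ∫ u, exp (-u ^ 2) / √(u ^ 2 + 2 * z) = exp z * besselKr 0 z := by
  rw [← integral_comp_sub_div_Ioi _ (half_pos hz), besselKr_zero_eq_integral,
    ← integral_const_mul]
  refine setIntegral_congr_fun measurableSet_Ioi fun v hv => ?_
  have hv : (0 : ℝ) < v := hv
  have hsq : (v - z / 2 / v) ^ 2 + 2 * z = (v + z / 2 / v) ^ 2 := by
    field_simp
    ring
  have hexp : -(v - z / 2 / v) ^ 2 = z + (-v ^ 2 - z ^ 2 / (4 * v ^ 2)) := by
    field_simp
    ring
  rw [smul_eq_mul, hsq, sqrt_sq (by positivity), hexp, exp_add]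
  field_simp

theorem tendsto_sqrt_mul_integral_exp_neg_sq_div_sqrt :
    Tendsto (fun z => √z * ∫ u, exp (-u ^ 2) / √(u ^ 2 + 2 * z)) atTop (𝓝 √(π / 2)) := by
  have hrescale : ∀ z > (0 : ℝ), √z * ∫ u, exp (-u ^ 2) / √(u ^ 2 + 2 * z) =
      ∫ u, exp (-u ^ 2) * (√(u ^ 2 * z⁻¹ + 2))⁻¹ := by
    intro z hz
    rw [← integral_const_mul]
    congr 1 with u
    rw [show u ^ 2 + 2 * z = z * (u ^ 2 * z⁻¹ + 2) by field_simp, sqrt_mul hz.le]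
    field_simp
  have hlimit : √(π / 2) = ∫ u, exp (-u ^ 2) * (√(u ^ 2 * 0 + 2))⁻¹ := by
    have := integral_gaussian 1
    simp only [neg_one_mul, div_one] at this
    simp only [mul_zero, zero_add]
    rw [integral_mul_const, this, sqrt_div' _ zero_le_two, div_eq_mul_inv]
  rw [hlimit]
  refine Tendsto.congr' (EventuallyEq.symm <| eventually_gt_atTop 0 |>.mono hrescale) ?_
  refine tendsto_integral_filter_of_dominated_convergence (fun u => exp (-u ^ 2) * (√2)⁻¹)
    (Eventually.of_forall fun z => by fun_prop) ?_ ?_ ?_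
  · filter_upwards [eventually_ge_atTop 0] with z hz
    refine Eventually.of_forall fun u => ?_
    rw [norm_of_nonneg (by positivity)]
    gcongr
    exact le_add_of_nonneg_left (by positivity)
  · simpa using (integrable_exp_neg_mul_sq one_pos).mul_const (√2)⁻¹
  · refine Eventually.of_forall fun u => Tendsto.const_mul _ ?_
    refine ((tendsto_inv_atTop_zero.const_mul _).add_const 2).sqrt.inv₀ ?_
    simp

theorem tendsto_sqrt_mul_exp_mul_besselKr_zero :
    Tendsto (fun z => √z * (exp z * besselKr 0 z)) atTop (𝓝 √(π / 2)) :=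
  tendsto_sqrt_mul_integral_exp_neg_sq_div_sqrt.congr' <| (eventually_gt_atTop 0).mono
    fun _ hz => by rw [integral_exp_neg_sq_div_sqrt_eq_exp_mul_besselKr_zero hz]

theorem atm_leading_term_brenner_subrahmanyam_general
    (S σ τ : ℝ) (hσ : 0 < σ) (hτ : 0 < τ) :
    Filter.Tendsto
      (fun α : ℝ =>
        S * (σ ^ 2 * α) * τ / Real.pi * Real.exp (α * (σ ^ 2 * α) * τ) *
          besselKr 0 (α * (σ ^ 2 * α) * τ))
      Filter.atTop
      (nhds (S * σ * Real.sqrt τ / Real.sqrt (2 * Real.pi))) := by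
  have hz : Tendsto (fun α : ℝ => α * (σ ^ 2 * α) * τ) atTop atTop := by
    refine ((tendsto_pow_atTop two_ne_zero).const_mul_atTop
      (by positivity : 0 < σ ^ 2 * τ)).congr fun α => ?_
    ring
  have hlim : S * σ * √τ / π * √(π / 2) = S * σ * √τ / √(2 * π) := by
    rw [sqrt_div' _ zero_le_two, mul_comm 2 π, sqrt_mul pi_pos.le, ← div_div]
    field_simp
    rw [sq_sqrt pi_pos.le]
  rw [← hlim]
  refine ((tendsto_sqrt_mul_exp_mul_besselKr_zero.comp hz).const_mul (S * σ * √τ / π)).congr' ?_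
  filter_upwards [eventually_gt_atTop 0] with α hα
  have hsqrt : √(α * (σ ^ 2 * α) * τ) = σ * α * √τ := by
    rw [show α * (σ ^ 2 * α) * τ = (σ * α) ^ 2 * τ by ring, sqrt_mul' _ hτ.le,
      sqrt_sq (by positivity)]
  simp only [Function.comp_apply, hsqrt]
  field_simp
  rw [sq_sqrt hτ.le]

/-- The at-the-money-forward leading term of the symmetric NIG European call series,
with `δ = σ²α`, converges as `α → ∞` to the Brenner–Subrahmanyam Black–Scholes
at-the-money approximation `S σ √τ / √(2π)`. -/
theorem atm_leading_term_brenner_subrahmanyam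
    (S σ τ : ℝ) (hS : 0 < S) (hσ : 0 < σ) (hτ : 0 < τ) :
    Filter.Tendsto
      (fun α : ℝ =>
        S * (σ ^ 2 * α) * τ / Real.pi * Real.exp (α * (σ ^ 2 * α) * τ) *
          besselKr 0 (α * (σ ^ 2 * α) * τ))
      Filter.atTop
      (nhds (S * σ * Real.sqrt τ / Real.sqrt (2 * Real.pi))) :=
  atm_leading_term_brenner_subrahmanyam_general S σ τ hσ hτ
end

section
/- Gaussian limit of the symmetric NIG density: fix σ > 0, μ ∈ ℝ and x ∈ ℝ, and for α > 0 set δ := σ²α. Then the symmetric NIG density at t = 1 converges pointwise to the normal density: lim_{α→∞} (αδ/π) e^{αδ} K₁(α√(δ² + (x−μ)²)) / √(δ² + (x−μ)²) = (1/(σ√(2π))) e^{−(x−μ)²/(2σ²)}, i.e. NIG(α, 0, δ, μ) with σ² = δ/α held fixed degenerates into the normal distribution N(μ, σ²) as α → ∞. -/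
open MeasureTheory

/-- Symmetric NIG density at time `t`. -/
noncomputable def nigDensity (α δ μ x t : ℝ) : ℝ :=
  (α * δ * t / Real.pi) * Real.exp (α * δ * t) *
    besselKr 1 (α * Real.sqrt ((δ * t) ^ 2 + (x - μ * t) ^ 2)) /
    Real.sqrt ((δ * t) ^ 2 + (x - μ * t) ^ 2)

/-!
Substituting `t = α (σ²α + u) / 2` in the integral defining `K₁` writes the density as
`∫_{u > -σ²α} (σ²/w) φ_w(u) φ_w(x - μ) du` with `w = σ² + u/α`, where `φ_w` is the centred normal
density of variance `w`. As `α → ∞`, `w → σ²` pointwise, and the bound `exp y ≥ y²/2` dominates the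
integrand by `C / (1 + u²)` uniformly in large `α`; dominated convergence and `∫ φ_{σ²} = 1` then
leave `φ_{σ²}(x - μ)`.
-/

open Real Set Filter Topology ProbabilityTheory
open scoped NNReal

theorem integral_Ioi_comp_add_right {E : Type*} [NormedAddCommGroup E] [NormedSpace ℝ E]
    (f : ℝ → E) (a c : ℝ) : ∫ x in Ioi a, f (x + c) = ∫ x in Ioi (a + c), f x := by
  rw [← (measurePreserving_add_right volume c).setIntegral_preimage_emb
    (measurableEmbedding_addRight c) f (Ioi (a + c)), preimage_add_const_Ioi, add_sub_cancel_right]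

lemma pow_four_le_mul_exp {w u s : ℝ} (hw : 0 < w) (hs : u ^ 2 ≤ s) :
    u ^ 4 ≤ 8 * w ^ 2 * exp (s / (2 * w)) := by
  have hy : 0 ≤ s / (2 * w) := div_nonneg ((sq_nonneg u).trans hs) (by positivity)
  calc u ^ 4 ≤ s ^ 2 := by nlinarith [sq_nonneg u]
    _ = 8 * w ^ 2 * ((s / (2 * w)) ^ 2 / 2) := by field_simp; ring
    _ ≤ 8 * w ^ 2 * exp (s / (2 * w)) := by
      gcongr
      linarith [quadratic_le_exp_of_nonneg hy]

lemma one_add_sq_mul_exp_div_sq_le {m w u s : ℝ} (hm : 0 < m) (hw : 0 < w)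
    (hmw : u ^ 2 ≤ 1 → m ≤ w) (hs : u ^ 2 ≤ s) :
    (1 + u ^ 2) * (exp (-s / (2 * w)) / w ^ 2) ≤ 2 / m ^ 2 + 16 := by
  have hm2 : 0 ≤ 2 / m ^ 2 := by positivity
  rcases le_or_gt (u ^ 2) 1 with hu | hu
  · have hE : exp (-s / (2 * w)) ≤ 1 :=
      exp_le_one_iff.mpr (div_nonpos_of_nonpos_of_nonneg (by nlinarith) (by positivity))
    calc (1 + u ^ 2) * (exp (-s / (2 * w)) / w ^ 2) ≤ 2 * (1 / m ^ 2) := by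
          gcongr
          · linarith
          · exact hmw hu
      _ ≤ 2 / m ^ 2 + 16 := by linarith [show 2 * (1 / m ^ 2) = 2 / m ^ 2 by ring]
  · have hu4 : 0 < u ^ 4 := by nlinarith
    calc (1 + u ^ 2) * (exp (-s / (2 * w)) / w ^ 2)
          = (1 + u ^ 2) / (w ^ 2 * exp (s / (2 * w))) := by rw [neg_div, exp_neg]; field_simp
      _ ≤ (1 + u ^ 2) / (u ^ 4 / 8) := by
          gcongr
          linarith [pow_four_le_mul_exp hw hs]
      _ ≤ 16 := by rw [div_le_iff₀ (by positivity)]; nlinarith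
      _ ≤ 2 / m ^ 2 + 16 := by linarith

lemma gaussianPDFReal_toNNReal_sq {σ : ℝ} (hσ : 0 < σ) (μ x : ℝ) :
    gaussianPDFReal μ (σ ^ 2).toNNReal x =
      1 / (σ * √(2 * π)) * exp (-(x - μ) ^ 2 / (2 * σ ^ 2)) := by
  simp only [gaussianPDFReal, Real.coe_toNNReal _ (sq_nonneg σ)]
  rw [Real.sqrt_mul (by positivity), Real.sqrt_sq hσ.le, mul_comm σ, one_div]

lemma gaussianPDFReal_zero_mul_gaussianPDFReal_zero (v : ℝ≥0) (u r : ℝ) :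
    gaussianPDFReal 0 v u * gaussianPDFReal 0 v r =
      (2 * π * v)⁻¹ * exp (-(u ^ 2 + r ^ 2) / (2 * v)) := by
  have hsq : √(2 * π * v) ^ 2 = 2 * π * v := Real.sq_sqrt (by positivity)
  simp only [gaussianPDFReal, sub_zero]
  rw [mul_mul_mul_comm, ← exp_add, ← mul_inv, ← sq, hsq]
  congr 2
  ring

lemma besselKr_one_mul {a : ℝ} (ha : 0 < a) (R : ℝ) :
    besselKr 1 (a * R) = R / 2 * ∫ v in Ioi 0, exp (-(a / 2) * (v + R ^ 2 / v)) / v ^ 2 := by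
  have hb : 0 < a / 2 := half_pos ha
  have hscale := integral_comp_mul_left_Ioi'
    (fun t => exp (-t - (a * R) ^ 2 / (4 * t)) * t ^ (-(1 : ℝ) - 1)) 0 hb
  rw [mul_zero] at hscale
  rw [besselKr, ← hscale, Real.rpow_one, smul_eq_mul, ← integral_const_mul, ← integral_const_mul,
    ← integral_const_mul]
  refine setIntegral_congr_fun measurableSet_Ioi fun v (hv : 0 < v) => ?_
  have hrpow : (a / 2 * v) ^ (-(1 : ℝ) - 1) = ((a / 2 * v) ^ 2)⁻¹ := by
    rw [show -(1 : ℝ) - 1 = -((2 : ℕ) : ℝ) by norm_num, Real.rpow_neg (by positivity),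
      Real.rpow_natCast]
  rw [hrpow, show -(a / 2 * v) - (a * R) ^ 2 / (4 * (a / 2 * v)) = -(a / 2) * (v + R ^ 2 / v) by
    field_simp; ring]
  field_simp

lemma nigDensity_one_eq_integral {α δ : ℝ} (hα : 0 < α) (hδ : 0 < δ) (μ x : ℝ) :
    nigDensity α δ μ x 1 =
      α * δ / (2 * π) * ∫ v in Ioi 0, exp (-α * ((v - δ) ^ 2 + (x - μ) ^ 2) / (2 * v)) / v ^ 2 := by
  simp only [nigDensity, mul_one]
  set R := √(δ ^ 2 + (x - μ) ^ 2)
  have hR : 0 < R := Real.sqrt_pos.mpr (by positivity)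
  have hR2 : R ^ 2 = δ ^ 2 + (x - μ) ^ 2 := Real.sq_sqrt (by positivity)
  have hexp : ∀ v ∈ Ioi (0 : ℝ), exp (α * δ) * (exp (-(α / 2) * (v + R ^ 2 / v)) / v ^ 2) =
      exp (-α * ((v - δ) ^ 2 + (x - μ) ^ 2) / (2 * v)) / v ^ 2 := fun v (hv : 0 < v) => by
    rw [← mul_div_assoc, ← Real.exp_add, hR2]
    congr 2
    field_simp
    ring
  rw [besselKr_one_mul hα, ← setIntegral_congr_fun measurableSet_Ioi hexp, integral_const_mul]
  generalize ∫ v in Ioi 0, exp (-(α / 2) * (v + R ^ 2 / v)) / v ^ 2 = I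
  field_simp

noncomputable def nigIntegrand (σ r α u : ℝ) : ℝ :=
  σ ^ 2 / (2 * π) * exp (-(u ^ 2 + r ^ 2) / (2 * (σ ^ 2 + u / α))) / (σ ^ 2 + u / α) ^ 2

lemma nigDensity_eq_integral_nigIntegrand {σ α : ℝ} (hσ : σ ≠ 0) (hα : 0 < α) (μ x : ℝ) :
    nigDensity α (σ ^ 2 * α) μ x 1 = ∫ u in Ioi (-(σ ^ 2 * α)), nigIntegrand σ (x - μ) α u := by
  rw [nigDensity_one_eq_integral hα (by positivity), ← neg_add_cancel (σ ^ 2 * α),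
    ← integral_Ioi_comp_add_right, ← integral_const_mul]
  refine setIntegral_congr_fun measurableSet_Ioi fun u (hu : -(σ ^ 2 * α) < u) => ?_
  have hw : σ ^ 2 * α + u ≠ 0 := by linarith
  rw [nigIntegrand, add_sub_cancel_right]
  field_simp
  ring_nf

lemma nigIntegrand_nonneg (σ r α u : ℝ) : 0 ≤ nigIntegrand σ r α u := by
  unfold nigIntegrand
  positivity

lemma nigIntegrand_le {σ α u : ℝ} (hσ : σ ≠ 0) (hα : 2 / σ ^ 2 ≤ α) (hu : -(σ ^ 2 * α) < u)
    (r : ℝ) : nigIntegrand σ r α u ≤ σ ^ 2 / (2 * π) * (8 / σ ^ 4 + 16) * (1 + u ^ 2)⁻¹ := by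
  have hα0 : 0 < α := (by positivity : (0 : ℝ) < 2 / σ ^ 2).trans_le hα
  have hinv : 1 / α ≤ σ ^ 2 / 2 := by
    rw [div_le_iff₀ hα0]; rw [div_le_iff₀ (by positivity)] at hα; linarith
  have hw : 0 < σ ^ 2 + u / α := by
    have : -σ ^ 2 < u / α := by rw [lt_div_iff₀ hα0]; linarith
    linarith
  have hmw : u ^ 2 ≤ 1 → σ ^ 2 / 2 ≤ σ ^ 2 + u / α := fun hu1 => by
    have : -1 / α ≤ u / α := by gcongr; nlinarith
    linarith [show -1 / α = -(1 / α) by ring]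
  have hbound := one_add_sq_mul_exp_div_sq_le (by positivity) hw hmw
    (le_add_of_nonneg_right (sq_nonneg r))
  rw [show 2 / (σ ^ 2 / 2) ^ 2 = 8 / σ ^ 4 by field_simp; ring] at hbound
  rw [nigIntegrand, mul_div_assoc, mul_assoc]
  gcongr
  rwa [le_mul_inv_iff₀ (by positivity), mul_comm]

lemma tendsto_nigIntegrand {σ : ℝ} (hσ : σ ≠ 0) (r u : ℝ) :
    Tendsto (fun α => nigIntegrand σ r α u) atTop
      (𝓝 (gaussianPDFReal 0 (σ ^ 2).toNNReal u * gaussianPDFReal 0 (σ ^ 2).toNNReal r)) := by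
  have hw : Tendsto (fun α : ℝ => σ ^ 2 + u / α) atTop (𝓝 (σ ^ 2)) := by
    have hu : Tendsto (fun α : ℝ => u / α) atTop (𝓝 0) := tendsto_const_nhds.div_atTop tendsto_id
    simpa using tendsto_const_nhds.add hu
  have hcont : ContinuousAt
      (fun w => σ ^ 2 / (2 * π) * exp (-(u ^ 2 + r ^ 2) / (2 * w)) / w ^ 2) (σ ^ 2) := by
    fun_prop (disch := positivity)
  have hlim : Tendsto (fun α => nigIntegrand σ r α u) atTop
      (𝓝 (σ ^ 2 / (2 * π) * exp (-(u ^ 2 + r ^ 2) / (2 * σ ^ 2)) / (σ ^ 2) ^ 2)) :=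
    hcont.tendsto.comp hw
  convert hlim using 2
  rw [gaussianPDFReal_zero_mul_gaussianPDFReal_zero, Real.coe_toNNReal _ (sq_nonneg σ)]
  field_simp

lemma tendsto_integral_nigIntegrand {σ : ℝ} (hσ : σ ≠ 0) (r : ℝ) :
    Tendsto (fun α => ∫ u in Ioi (-(σ ^ 2 * α)), nigIntegrand σ r α u) atTop
      (𝓝 (gaussianPDFReal 0 (σ ^ 2).toNNReal r)) := by
  have hlower : Tendsto (fun α => -(σ ^ 2 * α)) atTop atBot :=
    tendsto_neg_atTop_atBot.comp (tendsto_id.const_mul_atTop (by positivity))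
  have hdom := tendsto_integral_filter_of_dominated_convergence
    (fun u => σ ^ 2 / (2 * π) * (8 / σ ^ 4 + 16) * (1 + u ^ 2)⁻¹)
    (F := fun α => (Ioi (-(σ ^ 2 * α))).indicator (nigIntegrand σ r α))
    (Eventually.of_forall fun α => (Measurable.indicator (by unfold nigIntegrand; fun_prop)
      measurableSet_Ioi).aestronglyMeasurable)
    (by
      filter_upwards [eventually_ge_atTop (2 / σ ^ 2)] with α hα
      refine Eventually.of_forall fun u => ?_
      rw [Real.norm_eq_abs, abs_of_nonneg (indicator_nonneg (fun u _ => nigIntegrand_nonneg ..) u)]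
      by_cases hu : u ∈ Ioi (-(σ ^ 2 * α))
      · rw [indicator_of_mem hu]
        exact nigIntegrand_le hσ hα hu r
      · rw [indicator_of_notMem hu]
        positivity)
    (integrable_inv_one_add_sq.const_mul _)
    (Eventually.of_forall fun u => (tendsto_nigIntegrand hσ r u).congr'
      ((hlower.eventually (eventually_lt_atBot u)).mono fun α hu => (indicator_of_mem hu _).symm))
  rw [integral_mul_const, integral_gaussianPDFReal_eq_one _ (by simpa using hσ), one_mul] at hdom
  exact hdom.congr fun α => integral_indicator measurableSet_Ioi

/-- Gaussian limit of the symmetric NIG density: with `δ = σ²α` held so that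
`σ² = δ/α` is fixed, the density `NIG(α, 0, δ, μ)` at `t = 1` converges pointwise,
as `α → ∞`, to the normal density `N(μ, σ²)`. -/
theorem nig_gaussian_limit (σ μ x : ℝ) (hσ : 0 < σ) :
    Filter.Tendsto
      (fun α : ℝ => nigDensity α (σ ^ 2 * α) μ x 1)
      Filter.atTop
      (nhds (1 / (σ * Real.sqrt (2 * Real.pi)) * Real.exp (-(x - μ) ^ 2 / (2 * σ ^ 2)))) := by
  have hpdf : gaussianPDFReal μ (σ ^ 2).toNNReal x = gaussianPDFReal 0 (σ ^ 2).toNNReal (x - μ) := by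
    rw [gaussianPDFReal_sub, zero_add]
  rw [← gaussianPDFReal_toNNReal_sq hσ, hpdf]
  refine (tendsto_integral_nigIntegrand hσ.ne' (x - μ)).congr' ?_
  filter_upwards [eventually_gt_atTop 0] with α hα
  exact (nigDensity_eq_integral_nigIntegrand hσ.ne' hα μ x).symm
end
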